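/- Let k ≥ 2 and q ≥ 1 be integers and let h be as above. Then for every real c > 1/q, ∑_{n=1}^∞ |h(n)|/n^c ≤ (k−1) · (1 − k^{−qc})^{−1} · ζ(qc), where ζ is the Riemann zeta function. -/

import Mathlib

open scoped Classical

noncomputable def bAux (k n : ℕ) : ℤ := if k ∣ n then 1 - (k : ℤ) else 1

noncomputable def fAux (k q d : ℕ) : ℤ := if ∃ n : ℕ, d = k ^ (q * n) then 1 else 0

noncomputable def gAux (k q d : ℕ) : ℤ :=
  if ∃ n : ℕ, 0 < n ∧ d = n ^ q ∧ k ∣ n then 1 - (k : ℤ)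
  else if ∃ n : ℕ, 0 < n ∧ d = n ^ q then 1 else 0

noncomputable def hAux (k q n : ℕ) : ℤ :=
  ∑ d ∈ n.divisors, fAux k q d * gAux k q (n / d)

/-!
`f` is the indicator of the powers `k ^ (q a)` and `|g| ≤ (k - 1)` times the indicator of the
`q`-th powers, so `|h|` is dominated termwise by `k - 1` times the Dirichlet convolution of these
two indicators. Dirichlet series of convolutions of absolutely summable sequences multiply, and
the two factors are the geometric series `∑ₐ k ^ (-q c a) = (1 - k ^ (-q c))⁻¹` and
`∑ₘ m ^ (-q c) = ζ (q c)`.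
-/

lemma hasSum_sum_divisorsAntidiagonal_mul {u v : ℕ → ℝ} {a b : ℝ} (hu : HasSum u a)
    (hv : HasSum v b) (hu₀ : u 0 = 0) (hv₀ : v 0 = 0) :
    HasSum (fun n : ℕ ↦ ∑ p ∈ n.divisorsAntidiagonal, u p.1 * v p.2) (a * b) := by
  have hsum : Summable fun p : ℕ × ℕ ↦ u p.1 * v p.2 :=
    summable_mul_of_summable_norm (R := ℝ) (summable_norm_iff.mpr hu.summable)
      (summable_norm_iff.mpr hv.summable)
  refine ((hu.mul hv hsum).tsum_fiberwise (fun p ↦ p.1 * p.2)).congr_fun fun n ↦ ?_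
  rcases eq_or_ne n 0 with rfl | hn
  · have hzero : ∀ p : (fun p : ℕ × ℕ ↦ p.1 * p.2) ⁻¹' {0}, u p.1.1 * v p.1.2 = 0 := by
      rintro ⟨⟨x, y⟩, hp⟩
      rcases mul_eq_zero.mp hp with rfl | rfl <;> simp [hu₀, hv₀]
    simp [hzero]
  · rw [show (fun p : ℕ × ℕ ↦ p.1 * p.2) ⁻¹' {n} = n.divisorsAntidiagonal by ext; simp [hn],
      Finset.tsum_subtype' n.divisorsAntidiagonal fun p ↦ u p.1 * v p.2]

lemma hasSum_rpow_neg_riemannZeta {s : ℝ} (hs : 1 < s) :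
    HasSum (fun n : ℕ ↦ (n : ℝ) ^ (-s)) (riemannZeta s).re := by
  convert Complex.hasSum_re (LSeriesHasSum_one (s := s) (by simpa using hs)) with n
  rcases eq_or_ne n 0 with rfl | hn
  · simp [Real.zero_rpow (by linarith : -s ≠ 0)]
  · rw [LSeries.term_of_ne_zero hn, Pi.one_apply, one_div, ← Complex.ofReal_natCast,
      ← Complex.ofReal_cpow n.cast_nonneg, ← Complex.ofReal_inv, Complex.ofReal_re,
      Real.rpow_neg n.cast_nonneg]

noncomputable def powIndicator (q d : ℕ) : ℤ := if ∃ n : ℕ, 0 < n ∧ d = n ^ q then 1 else 0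

lemma abs_gAux_le {k : ℕ} (hk : 2 ≤ k) (q d : ℕ) :
    |gAux k q d| ≤ (k - 1) * powIndicator q d := by
  unfold gAux powIndicator
  split_ifs with h₁ h₂ h₂
  · rw [abs_sub_comm, abs_of_nonneg] <;> omega
  · obtain ⟨n, hn, hd, -⟩ := h₁
    exact absurd ⟨n, hn, hd⟩ h₂
  · rw [abs_one, mul_one]; omega
  · simp

lemma abs_fAux (k q d : ℕ) : |fAux k q d| = fAux k q d := by
  unfold fAux; split_ifs <;> simp

lemma abs_hAux_le {k : ℕ} (hk : 2 ≤ k) (q n : ℕ) :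
    |hAux k q n| ≤ (k - 1) * ∑ p ∈ n.divisorsAntidiagonal, fAux k q p.1 * powIndicator q p.2 := by
  rw [hAux, ← Nat.sum_divisorsAntidiagonal fun x y ↦ fAux k q x * gAux k q y, Finset.mul_sum]
  refine (Finset.abs_sum_le_sum_abs _ _).trans (Finset.sum_le_sum fun p _ ↦ ?_)
  rw [abs_mul, abs_fAux, mul_left_comm]
  exact mul_le_mul_of_nonneg_left (abs_gAux_le hk q p.2) (by rw [← abs_fAux]; positivity)

lemma abs_hAux_div_rpow_le {k : ℕ} (hk : 2 ≤ k) (q n : ℕ) (c : ℝ) :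
    |(hAux k q n : ℝ)| / (n : ℝ) ^ c ≤ (k - 1) * ∑ p ∈ n.divisorsAntidiagonal,
      ((fAux k q p.1 : ℝ) * (p.1 : ℝ) ^ (-c)) * ((powIndicator q p.2 : ℝ) * (p.2 : ℝ) ^ (-c)) := by
  have hweight : ∑ p ∈ n.divisorsAntidiagonal,
      ((fAux k q p.1 : ℝ) * (p.1 : ℝ) ^ (-c)) * ((powIndicator q p.2 : ℝ) * (p.2 : ℝ) ^ (-c)) =
      (∑ p ∈ n.divisorsAntidiagonal, (fAux k q p.1 * powIndicator q p.2 : ℤ)) * (n : ℝ) ^ (-c) := by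
    push_cast
    rw [Finset.sum_mul]
    refine Finset.sum_congr rfl fun p hp ↦ ?_
    rw [← (Nat.mem_divisorsAntidiagonal.mp hp).1, Nat.cast_mul,
      Real.mul_rpow p.1.cast_nonneg p.2.cast_nonneg]
    ring
  have hbound : |(hAux k q n : ℝ)| ≤ (k - 1) *
      ((∑ p ∈ n.divisorsAntidiagonal, fAux k q p.1 * powIndicator q p.2 : ℤ) : ℝ) := by
    exact_mod_cast abs_hAux_le hk q n
  rw [div_eq_mul_inv, ← Real.rpow_neg n.cast_nonneg, hweight, ← mul_assoc]
  exact mul_le_mul_of_nonneg_right hbound (by positivity)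

lemma hasSum_fAux_mul_rpow_neg {k q : ℕ} (hk : 2 ≤ k) (hq : 1 ≤ q) {c : ℝ} (hc : 0 < c) :
    HasSum (fun x : ℕ ↦ (fAux k q x : ℝ) * (x : ℝ) ^ (-c)) (1 - (k : ℝ) ^ (-(q * c)))⁻¹ := by
  have hinj : Function.Injective fun a : ℕ ↦ k ^ (q * a) :=
    (Nat.pow_right_injective hk).comp (mul_right_injective₀ (by omega))
  refine (hinj.hasSum_iff fun x hx ↦ ?_).mp ?_
  · simp [fAux, show ¬∃ a, x = k ^ (q * a) from fun ⟨a, ha⟩ ↦ hx ⟨a, ha.symm⟩]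
  have hk₁ : (1 : ℝ) < k := by exact_mod_cast hk
  have hterm : ∀ a : ℕ, (fAux k q (k ^ (q * a)) : ℝ) * ((k ^ (q * a) : ℕ) : ℝ) ^ (-c) =
      ((k : ℝ) ^ (-(q * c))) ^ a := by
    intro a
    rw [fAux, if_pos ⟨a, rfl⟩, Int.cast_one, one_mul, Nat.cast_pow, ← Real.rpow_natCast,
      ← Real.rpow_natCast, ← Real.rpow_mul (by positivity), ← Real.rpow_mul (by positivity)]
    push_cast
    ring_nf
  simp only [Function.comp_def, hterm]
  exact hasSum_geometric_of_lt_one (by positivity)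
    (Real.rpow_lt_one_of_one_lt_of_neg hk₁ (by nlinarith [show (1 : ℝ) ≤ q by exact_mod_cast hq]))

lemma hasSum_powIndicator_mul_rpow_neg {q : ℕ} (hq : 1 ≤ q) {c : ℝ} (hc : 1 < q * c) :
    HasSum (fun y : ℕ ↦ (powIndicator q y : ℝ) * (y : ℝ) ^ (-c)) (riemannZeta (q * c : ℝ)).re := by
  have hinj : Function.Injective fun m : ℕ ↦ m ^ q := Nat.pow_left_injective (by omega)
  refine (hinj.hasSum_iff fun y hy ↦ ?_).mp ?_
  · simp [powIndicator, show ¬∃ m, 0 < m ∧ y = m ^ q from fun ⟨m, _, hm⟩ ↦ hy ⟨m, hm.symm⟩]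
  have hterm : ∀ m : ℕ, (powIndicator q (m ^ q) : ℝ) * ((m ^ q : ℕ) : ℝ) ^ (-c) =
      (m : ℝ) ^ (-(q * c)) := by
    intro m
    rcases Nat.eq_zero_or_pos m with rfl | hm
    · simp [powIndicator, zero_pow (by omega : q ≠ 0), Real.zero_rpow (by linarith : -(q * c) ≠ 0),
        eq_comm (a := 0), Nat.pos_iff_ne_zero]
    rw [powIndicator, if_pos ⟨m, hm, rfl⟩, Int.cast_one, one_mul, Nat.cast_pow,
      ← Real.rpow_natCast, ← Real.rpow_mul (by positivity)]
    ring_nf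
  simp only [Function.comp_def, hterm]
  exact hasSum_rpow_neg_riemannZeta hc

/-- for real `c > 1/q`,
`∑_{n=1}^∞ |h(n)|/n^c ≤ (k-1)(1 - k^{-qc})⁻¹ ζ(qc)`. -/
theorem stmt_5 (k q : ℕ) (hk : 2 ≤ k) (hq : 1 ≤ q) :
    ∀ c : ℝ, 1 / (q : ℝ) < c →
      ∑' n : ℕ, |(hAux k q (n + 1) : ℝ)| / ((n + 1 : ℝ) ^ c) ≤
        ((k : ℝ) - 1) * (1 - (k : ℝ) ^ (-((q : ℝ) * c)))⁻¹ *
          (riemannZeta (((q : ℝ) * c : ℝ) : ℂ)).re := by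
  intro c hc
  have hq₀ : (0 : ℝ) < q := by exact_mod_cast hq
  have hc₀ : 0 < c := (one_div_pos.mpr hq₀).trans hc
  have hqc : 1 < q * c := by rwa [div_lt_iff₀' hq₀] at hc
  have hzero : (0 : ℝ) ^ (-c) = 0 := Real.zero_rpow (neg_ne_zero.mpr hc₀.ne')
  have hmajorant := (hasSum_sum_divisorsAntidiagonal_mul (hasSum_fAux_mul_rpow_neg hk hq hc₀)
    (hasSum_powIndicator_mul_rpow_neg hq hqc) (by simp [hzero]) (by simp [hzero])).mul_left
    ((k : ℝ) - 1)
  rw [← hasSum_nat_add_iff' 1] at hmajorant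
  simp only [Finset.range_one, Finset.sum_singleton, Nat.divisorsAntidiagonal_zero,
    Finset.sum_empty, mul_zero, sub_zero] at hmajorant
  have hbound := fun n : ℕ ↦ abs_hAux_div_rpow_le hk q (n + 1) c
  push_cast at hbound
  rw [mul_assoc]
  exact hasSum_le hbound (Summable.of_nonneg_of_le (fun n ↦ by positivity) hbound
    hmajorant.summable).hasSum hmajorant
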